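/- Let M : Σ → Matrix Q Q ℝ be row-stochastic, C ⊆ Q with (M_σ)_{q,q} = 1 for every q ∈ C and σ ∈ Σ, and suppose there exists η > 0 with ∑_{q' ∈ C} (M_σ)_{q,q'} ≥ η for all σ ∈ Σ, q ∈ Q. Let F ⊆ Q with Q∖F ⊆ C, let q₀ ∉ C, and define the complemented accepting set F̄ = (Q∖C) ∪ (C∖F). Then for every infinite word w : ℕ → Σ, Safe_F(w) + Safe_{F̄}(w) = 1; i.e., the automaton with accepting set F̄ is the complement of the one with accepting set F. -/

import Mathlib

open Matrix

/-- The sub-stochastic matrix obtained from `M` by zeroing out all columns outside `F`. -/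
noncomputable def subMat {Q : Type*} [DecidableEq Q] (M : Matrix Q Q ℝ) (F : Finset Q) :
    Matrix Q Q ℝ :=
  Matrix.of fun q q' => if q' ∈ F then M q q' else 0

/-- The probability of staying inside `F` during the first `n` steps while reading `w`. -/
noncomputable def safeSeq {Q : Type*} [Fintype Q] [DecidableEq Q] {S : Type*}
    (M : S → Matrix Q Q ℝ) (F : Finset Q) (q₀ : Q) (w : ℕ → S) (n : ℕ) : ℝ :=
  ∑ q, ((List.range n).foldl (fun v i => Matrix.vecMul v (subMat (M (w i)) F))
    (Pi.single q₀ 1)) q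

/-- The safety value of `w`: the probability of staying in `F` forever. -/
noncomputable def safeVal {Q : Type*} [Fintype Q] [DecidableEq Q] {S : Type*}
    (M : S → Matrix Q Q ℝ) (F : Finset Q) (q₀ : Q) (w : ℕ → S) : ℝ :=
  ⨅ n : ℕ, safeSeq M F q₀ w n

/-!
Let `u_n` be the state distribution after reading `n` letters, with no state forbidden.
Since every state of `C` is absorbing, a run that ends in `q` at time `n` either never left
`Cᶜ` or entered `C` and then stayed at `q`. Hence, for every `G ⊇ Cᶜ` containing `q₀`, the
weight of the runs that stayed in `G` is `safeSeq G n = ∑ q ∈ G, u_n q`. As `F ∪ F̄ = Q` and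
`F ∩ F̄ = Cᶜ`, this gives `safeSeq F n + safeSeq F̄ n = 1 + safeSeq Cᶜ n`, and the last term
is at most `(1 - η) ^ n` because every step enters `C` with probability at least `η`.
-/

open Filter Topology Finset

lemma apply_eq_zero_of_sum_eq_one {ι : Type*} [Fintype ι] [DecidableEq ι]
    {v : ι → ℝ} (hv : ∀ i, 0 ≤ v i) (hsum : ∑ i, v i = 1) {i : ι} (hi : v i = 1)
    {j : ι} (hji : j ≠ i) : v j = 0 := by
  have hrest : ∑ k ∈ univ.erase i, v k = 0 := by
    have := add_sum_erase univ v (mem_univ i)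
    linarith
  exact (sum_eq_zero_iff_of_nonneg fun k _ => hv k).mp hrest j (mem_erase.mpr ⟨hji, mem_univ j⟩)

lemma sum_add_sum_compl_union_sdiff {ι β : Type*} [Fintype ι] [DecidableEq ι] [AddCommMonoid β]
    {C F : Finset ι} (hFC : Fᶜ ⊆ C) (f : ι → β) :
    ∑ i ∈ F, f i + ∑ i ∈ Cᶜ ∪ (C \ F), f i = ∑ i, f i + ∑ i ∈ Cᶜ, f i := by
  rw [← sum_union_inter]
  congr 2 <;> ext i <;> have := @hFC i <;>
    simp only [mem_union, mem_inter, mem_compl, Finset.mem_sdiff, mem_univ] at this ⊢ <;> tauto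

section SafeDist

variable {Q : Type*} [Fintype Q] [DecidableEq Q] {S : Type*}

/-- The row vector `e_{q₀} · N_{w₀} ⋯ N_{w_{n-1}}`, whose total mass is `safeSeq`. -/
noncomputable def safeDist (M : S → Matrix Q Q ℝ) (G : Finset Q) (q₀ : Q) (w : ℕ → S) (n : ℕ) :
    Q → ℝ :=
  (List.range n).foldl (fun v i => vecMul v (subMat (M (w i)) G)) (Pi.single q₀ 1)

variable (M : S → Matrix Q Q ℝ) (G : Finset Q) (q₀ : Q) (w : ℕ → S)

lemma safeSeq_eq_sum_safeDist (n : ℕ) : safeSeq M G q₀ w n = ∑ q, safeDist M G q₀ w n q := rfl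

lemma safeDist_zero : safeDist M G q₀ w 0 = Pi.single q₀ 1 := rfl

lemma safeDist_succ_apply (n : ℕ) (q' : Q) :
    safeDist M G q₀ w (n + 1) q' =
      if q' ∈ G then ∑ q, safeDist M G q₀ w n q * M (w n) q q' else 0 := by
  have hfold : safeDist M G q₀ w (n + 1) = vecMul (safeDist M G q₀ w n) (subMat (M (w n)) G) := by
    rw [safeDist, List.range_succ, List.foldl_append]
    rfl
  rw [hfold]
  simp only [vecMul, dotProduct, subMat, of_apply]
  split_ifs <;> simp

lemma safeDist_nonneg (hnn : ∀ σ q q', 0 ≤ M σ q q') (n : ℕ) (q : Q) :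
    0 ≤ safeDist M G q₀ w n q := by
  induction n generalizing q with
  | zero =>
    rw [safeDist_zero]
    exact (Pi.single_nonneg.2 zero_le_one : (0 : Q → ℝ) ≤ Pi.single q₀ 1) q
  | succ n ih =>
    rw [safeDist_succ_apply]
    split_ifs
    · exact sum_nonneg fun p _ => mul_nonneg (ih p) (hnn _ _ _)
    · exact le_rfl

lemma safeSeq_nonneg (hnn : ∀ σ q q', 0 ≤ M σ q q') (n : ℕ) : 0 ≤ safeSeq M G q₀ w n :=
  sum_nonneg fun q _ => safeDist_nonneg M G q₀ w hnn n q

lemma safeSeq_succ (n : ℕ) :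
    safeSeq M G q₀ w (n + 1) = ∑ q, safeDist M G q₀ w n q * ∑ q' ∈ G, M (w n) q q' := by
  simp only [safeSeq_eq_sum_safeDist, safeDist_succ_apply, sum_ite_mem, univ_inter, mul_sum]
  exact sum_comm

lemma safeSeq_succ_le_mul (hnn : ∀ σ q q', 0 ≤ M σ q q') {r : ℝ}
    (hr : ∀ σ q, ∑ q' ∈ G, M σ q q' ≤ r) (n : ℕ) :
    safeSeq M G q₀ w (n + 1) ≤ r * safeSeq M G q₀ w n := by
  rw [safeSeq_succ, safeSeq_eq_sum_safeDist, mul_sum]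
  exact sum_le_sum fun q _ => by
    rw [mul_comm r]
    exact mul_le_mul_of_nonneg_left (hr _ q) (safeDist_nonneg M G q₀ w hnn n q)

lemma safeSeq_le_pow (hnn : ∀ σ q q', 0 ≤ M σ q q') {r : ℝ} (hr0 : 0 ≤ r)
    (hr : ∀ σ q, ∑ q' ∈ G, M σ q q' ≤ r) (n : ℕ) :
    safeSeq M G q₀ w n ≤ r ^ n := by
  induction n with
  | zero => simp [safeSeq_eq_sum_safeDist, safeDist_zero]
  | succ n ih =>
    calc safeSeq M G q₀ w (n + 1) ≤ r * safeSeq M G q₀ w n := safeSeq_succ_le_mul M G q₀ w hnn hr n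
      _ ≤ r * r ^ n := mul_le_mul_of_nonneg_left ih hr0
      _ = r ^ (n + 1) := (pow_succ' r n).symm

lemma safeSeq_univ (hrow : ∀ σ q, ∑ q', M σ q q' = 1) (n : ℕ) :
    safeSeq M univ q₀ w n = 1 := by
  induction n with
  | zero => simp [safeSeq_eq_sum_safeDist, safeDist_zero]
  | succ n ih => simpa only [safeSeq_succ, hrow, mul_one, safeSeq_eq_sum_safeDist] using ih

lemma tendsto_safeSeq_safeVal (hnn : ∀ σ q q', 0 ≤ M σ q q')
    (hrow : ∀ σ q, ∑ q', M σ q q' = 1) :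
    Tendsto (safeSeq M G q₀ w) atTop (𝓝 (safeVal M G q₀ w)) := by
  have hrowG : ∀ σ q, ∑ q' ∈ G, M σ q q' ≤ 1 := fun σ q =>
    (hrow σ q).symm ▸ sum_le_univ_sum_of_nonneg (hnn σ q)
  refine tendsto_atTop_ciInf (antitone_nat_of_succ_le fun n => ?_) ⟨0, ?_⟩
  · simpa using safeSeq_succ_le_mul M G q₀ w hnn hrowG n
  · rintro _ ⟨n, rfl⟩
    exact safeSeq_nonneg M G q₀ w hnn n

/-- If every state outside `G` can only move to itself, a run ending in `G` never left `G`. -/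
lemma safeDist_eq_ite (hG : ∀ σ, ∀ p ∉ G, ∀ q ≠ p, M σ p q = 0) (hq₀ : q₀ ∈ G) (n : ℕ)
    (q : Q) : safeDist M G q₀ w n q = if q ∈ G then safeDist M univ q₀ w n q else 0 := by
  induction n generalizing q with
  | zero =>
    rw [safeDist_zero, safeDist_zero]
    split_ifs with hq
    · rfl
    · exact Pi.single_eq_of_ne (by rintro rfl; exact hq hq₀) _
  | succ n ih =>
    rw [safeDist_succ_apply, safeDist_succ_apply, if_pos (mem_univ q)]
    split_ifs with hq
    · refine sum_congr rfl fun p _ => ?_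
      rw [ih p]
      split_ifs with hp
      · rfl
      · rw [hG _ p hp q (by rintro rfl; exact hp hq), mul_zero, mul_zero]
    · rfl

lemma safeSeq_eq_sum_safeDist_univ (hG : ∀ σ, ∀ p ∉ G, ∀ q ≠ p, M σ p q = 0) (hq₀ : q₀ ∈ G)
    (n : ℕ) : safeSeq M G q₀ w n = ∑ q ∈ G, safeDist M univ q₀ w n q := by
  simp only [safeSeq_eq_sum_safeDist, safeDist_eq_ite M G q₀ w hG hq₀, sum_ite_mem, univ_inter]

lemma safeSeq_eq_sum_safeDist_univ_of_absorbing (hnn : ∀ σ q q', 0 ≤ M σ q q')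
    (hrow : ∀ σ q, ∑ q', M σ q q' = 1) {C : Finset Q} (habs : ∀ q ∈ C, ∀ σ, M σ q q = 1)
    (hGC : Gᶜ ⊆ C) (hq₀ : q₀ ∉ C) (n : ℕ) :
    safeSeq M G q₀ w n = ∑ q ∈ G, safeDist M univ q₀ w n q :=
  safeSeq_eq_sum_safeDist_univ M G q₀ w
    (fun σ p hp _ hqp => apply_eq_zero_of_sum_eq_one (hnn σ p) (hrow σ p)
      (habs p (hGC (mem_compl.2 hp)) σ) hqp)
    (by by_contra h; exact hq₀ (hGC (mem_compl.2 h))) n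

end SafeDist

theorem stmt9_general {Q : Type*} [Fintype Q] [DecidableEq Q] {S : Type*}
    (M : S → Matrix Q Q ℝ)
    (hnn : ∀ σ q q', 0 ≤ M σ q q') (hrow : ∀ σ q, ∑ q', M σ q q' = 1)
    (C : Finset Q) (habs : ∀ q ∈ C, ∀ σ, M σ q q = 1)
    (η : ℝ) (hη : 0 < η) (hmin : ∀ σ q, η ≤ ∑ q' ∈ C, M σ q q')
    (F : Finset Q) (hFC : Fᶜ ⊆ C) (q₀ : Q) (hq₀ : q₀ ∉ C) (w : ℕ → S) :
    safeVal M F q₀ w + safeVal M (Cᶜ ∪ (C \ F)) q₀ w = 1 := by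
  have hsum : ∀ n, safeSeq M F q₀ w n + safeSeq M (Cᶜ ∪ (C \ F)) q₀ w n =
      1 + safeSeq M Cᶜ q₀ w n := fun n => by
    have hFbarC : (Cᶜ ∪ (C \ F))ᶜ ⊆ C := fun q hq => by simp_all
    have hstay G (hGC : Gᶜ ⊆ C) :=
      safeSeq_eq_sum_safeDist_univ_of_absorbing M G q₀ w hnn hrow habs hGC hq₀ n
    rw [hstay F hFC, hstay _ hFbarC, hstay Cᶜ (compl_compl C).subset,
      sum_add_sum_compl_union_sdiff hFC, ← safeSeq_univ M q₀ w hrow n, safeSeq_eq_sum_safeDist]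
  have hη1 : η ≤ 1 :=
    (hmin (w 0) q₀).trans ((hrow (w 0) q₀) ▸ sum_le_univ_sum_of_nonneg (hnn _ _))
  have hescape : Tendsto (safeSeq M Cᶜ q₀ w) atTop (𝓝 0) := by
    refine squeeze_zero (safeSeq_nonneg M Cᶜ q₀ w hnn)
      (safeSeq_le_pow M Cᶜ q₀ w hnn (sub_nonneg.2 hη1) fun σ q => ?_)
      (tendsto_pow_atTop_nhds_zero_of_lt_one (sub_nonneg.2 hη1) (by linarith))
    linarith [sum_compl_add_sum C (M σ q), hrow σ q, hmin σ q]
  refine tendsto_nhds_unique ((tendsto_safeSeq_safeVal M F q₀ w hnn hrow).add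
    (tendsto_safeSeq_safeVal M _ q₀ w hnn hrow)) ?_
  simpa only [hsum, add_zero] using tendsto_const_nhds.add hescape

theorem stmt9 {Q : Type*} [Fintype Q] [DecidableEq Q] [Nonempty Q] {S : Type*}
    (M : S → Matrix Q Q ℝ)
    (hnn : ∀ σ q q', 0 ≤ M σ q q') (hrow : ∀ σ q, ∑ q', M σ q q' = 1)
    (C : Finset Q) (habs : ∀ q ∈ C, ∀ σ, M σ q q = 1)
    (η : ℝ) (hη : 0 < η) (hmin : ∀ σ q, η ≤ ∑ q' ∈ C, M σ q q')
    (F : Finset Q) (hFC : Fᶜ ⊆ C) (q₀ : Q) (hq₀ : q₀ ∉ C) (w : ℕ → S) :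
    safeVal M F q₀ w + safeVal M (Cᶜ ∪ (C \ F)) q₀ w = 1 :=
  stmt9_general M hnn hrow C habs η hη hmin F hFC q₀ hq₀ w
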